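/- Let f : ℝ^d → ℝ be (H0,H1)-smooth with H0, H1 > 0, convex, and attain its minimum f* at x*. Run GD with warm-up step size η_k = θ·min{1/H0, 1/(3H1·F_k)}, F_k := f(x^k) − f*, with θ = 1/(4√2 + 4), for N iterations, and let R = ‖x^0 − x*‖. Let T be the smallest index k ∈ {0,…,N−1} with F_k < H0/(3H1), with T = N if no such index exists. If T < N, then f(x^N) − f* ≤ min{ (1 − θ/(6·H1·R²))^T · F_0 , 2·H0·R²/(θ·(N−T)) }; if T = N, then f(x^N) − f* ≤ (1 − θ/(6·H1·R²))^N · F_0. -/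

import Mathlib

/-!
On the ball of radius `1/√H1` around `y`, `(H0,H1)`-smoothness is ordinary Lipschitz continuity
of the gradient with constant `L(y) = H0 + H1 (f y - f*)`, so the usual descent lemma holds there.
Testing it with a step of length `1/√H1` against the gradient gives `√H1 ‖∇f y‖ ≤ 3/2 L(y)`, which
keeps every warm-up step `η_k` inside that ball with `η_k L(x^k) ≤ 4θ/3`; hence
`F_{k+1} ≤ F_k - η_k/2 ‖∇f(x^k)‖²`. Convexity makes `‖x^k - x*‖` nonincreasing and gives
`F_k ≤ R ‖∇f(x^k)‖`, so `R² F_{k+1} ≤ R² F_k - η_k/2 F_k²`. Before `T` the step is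
`θ/(3 H1 F_k)` and this is the contraction by `1 - θ/(6 H1 R²)`; from `T` on the step is `θ/H0`
and the recursion `F_{k+1} ≤ F_k - F_k²/a` gives `(N - T) F_N ≤ a = 2 H0 R²/θ`.
-/

open scoped RealInnerProductSpace

noncomputable section

theorem natCast_mul_le_of_le_sub_sq_div {u : ℕ → ℝ} {a : ℝ} (ha : 0 < a) (hu : ∀ k, 0 ≤ u k)
    {n : ℕ} (h : ∀ k < n, u (k + 1) ≤ u k - u k ^ 2 / a) :
    n * u n ≤ a := by
  induction n with
  | zero => simp [ha.le]
  | succ n ih =>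
    have hn := ih fun k hk => h k (by omega)
    have hstep := h n n.lt_succ_self
    -- with `b = u n / a` the step reads `u (n + 1) ≤ a b (1 - b)`, and `(n + 1) b (1 - b) ≤ 1 - b²`
    set b := u n / a
    have hub : u n = a * b := by simp only [b]; field_simp
    rw [hub, mul_pow, sq, mul_assoc, mul_div_cancel_left₀ _ ha.ne'] at hstep
    rw [hub] at hn
    have hb0 : 0 ≤ b := div_nonneg (hu n) ha.le
    have hb1 : b ≤ 1 := by
      by_contra! hb
      nlinarith [hu (n + 1), mul_pos (mul_pos ha (zero_lt_one.trans hb)) (sub_pos.2 hb)]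
    have hnb : n * b ≤ 1 := by nlinarith
    push_cast
    nlinarith [mul_le_mul_of_nonneg_left hstep (by positivity : (0 : ℝ) ≤ n + 1)]

/-- The warm-up step size `θ · min {1 / H0, 1 / (3 H1 F)}`, read as `θ / H0` when `F = 0`. -/
def warmupStepSize (θ H0 H1 F : ℝ) : ℝ := θ / max H0 (3 * H1 * F)

section WarmupStepSize

variable {θ H0 H1 F : ℝ}

theorem warmupStepSize_nonneg (hθ : 0 ≤ θ) (hH0 : 0 < H0) : 0 ≤ warmupStepSize θ H0 H1 F :=
  div_nonneg hθ (hH0.le.trans (le_max_left _ _))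

theorem warmupStepSize_mul_le (hθ : 0 ≤ θ) (hH0 : 0 < H0) :
    warmupStepSize θ H0 H1 F * (H0 + H1 * F) ≤ 4 / 3 * θ := by
  have hmax := hH0.trans_le (le_max_left H0 (3 * H1 * F))
  rw [warmupStepSize, div_mul_eq_mul_div, div_le_iff₀ hmax]
  nlinarith [le_max_left H0 (3 * H1 * F), le_max_right H0 (3 * H1 * F)]

theorem warmupStepSize_of_le (hH1 : 0 < H1) (hF : H0 / (3 * H1) ≤ F) :
    warmupStepSize θ H0 H1 F = θ / (3 * H1 * F) := by
  rw [warmupStepSize, max_eq_right ((div_le_iff₀' (by positivity)).1 hF)]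

theorem warmupStepSize_of_lt (hH1 : 0 < H1) (hF : F < H0 / (3 * H1)) :
    warmupStepSize θ H0 H1 F = θ / H0 := by
  rw [warmupStepSize, max_eq_left ((lt_div_iff₀' (by positivity)).1 hF).le]

end WarmupStepSize

section WarmupRecursion

variable {θ H0 H1 R : ℝ} {F : ℕ → ℝ}

theorem le_geom_of_warmup_recursion (hH0 : 0 < H0) (hH1 : 0 < H1) (hR : 0 < R)
    (hF : ∀ k, 0 ≤ F k)
    (hrec : ∀ k, R ^ 2 * F (k + 1) ≤ R ^ 2 * F k - warmupStepSize θ H0 H1 (F k) / 2 * F k ^ 2)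
    {T : ℕ} (hT : ∀ k < T, H0 / (3 * H1) ≤ F k) :
    F T ≤ (1 - θ / (6 * H1 * R ^ 2)) ^ T * F 0 := by
  have hpos : ∀ k < T, 0 < F k := fun k hk =>
    (by positivity : 0 < H0 / (3 * H1)).trans_le (hT k hk)
  have hstep : ∀ k < T, F (k + 1) ≤ (1 - θ / (6 * H1 * R ^ 2)) * F k := by
    intro k hk
    have h := hrec k
    have hFk := (hpos k hk).ne'
    rw [warmupStepSize_of_le hH1 (hT k hk),
      show θ / (3 * H1 * F k) / 2 * F k ^ 2 = R ^ 2 * (θ / (6 * H1 * R ^ 2) * F k) by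
        field_simp; ring] at h
    exact le_of_mul_le_mul_left (a := R ^ 2) (by linarith) (by positivity)
  rcases T.eq_zero_or_pos with rfl | hT0
  · simp
  · have hq := nonneg_of_mul_nonneg_left ((hF 1).trans (hstep 0 hT0)) (hpos 0 hT0)
    exact le_geom hq T hstep

theorem natCast_mul_le_of_warmup_recursion (hH0 : 0 < H0) (hH1 : 0 < H1) (hθ : 0 < θ)
    (hR : 0 < R) (hF : ∀ k, 0 ≤ F k) (hanti : Antitone F)
    (hrec : ∀ k, R ^ 2 * F (k + 1) ≤ R ^ 2 * F k - warmupStepSize θ H0 H1 (F k) / 2 * F k ^ 2)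
    {T : ℕ} (hT : F T < H0 / (3 * H1)) (n : ℕ) :
    n * F (T + n) ≤ 2 * H0 * R ^ 2 / θ := by
  refine natCast_mul_le_of_le_sub_sq_div (u := fun k => F (T + k)) (by positivity)
    (fun k => hF _) fun k _ => ?_
  show F (T + k + 1) ≤ F (T + k) - F (T + k) ^ 2 / (2 * H0 * R ^ 2 / θ)
  have h := hrec (T + k)
  rw [warmupStepSize_of_lt hH1 ((hanti (Nat.le_add_right T k)).trans_lt hT),
    show θ / H0 / 2 * F (T + k) ^ 2 = R ^ 2 * (F (T + k) ^ 2 / (2 * H0 * R ^ 2 / θ)) by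
      field_simp] at h
  exact le_of_mul_le_mul_left (a := R ^ 2) (by linarith) (by positivity)

end WarmupRecursion

variable {E : Type*} [NormedAddCommGroup E]

/-- `(H0,H1)`-smoothness of `f` with gradient `f'`, where `m` plays the role of `f*`. -/
def IsH0H1Smooth (f : E → ℝ) (f' : E → E) (H0 H1 m : ℝ) : Prop :=
  ∀ y z, √H1 * ‖z - y‖ ≤ 1 → ‖f' z - f' y‖ ≤ (H0 + H1 * (f y - m)) * ‖z - y‖

variable {f : E → ℝ} {f' : E → E}

theorem IsH0H1Smooth.norm_gradient_sub_le {H0 H1 m : ℝ} (hs : IsH0H1Smooth f f' H0 H1 m)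
    (hH1 : 0 < H1) (y z : E) (hz : ‖z - y‖ ≤ 1 / √H1) :
    ‖f' z - f' y‖ ≤ (H0 + H1 * (f y - m)) * ‖z - y‖ :=
  hs y z ((le_div_iff₀' (Real.sqrt_pos.2 hH1)).1 hz)

variable [InnerProductSpace ℝ E]

theorem norm_sub_smul_sub_le {g y z : E} {η F : ℝ} (hconv : F ≤ ⟪g, y - z⟫) (hη : 0 ≤ η)
    (hg : η / 2 * ‖g‖ ^ 2 ≤ F) :
    ‖y - η • g - z‖ ≤ ‖y - z‖ := by
  rw [← sq_le_sq₀ (norm_nonneg _) (norm_nonneg _), sub_right_comm, norm_sub_sq_real,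
    real_inner_smul_right, norm_smul, Real.norm_of_nonneg hη, real_inner_comm]
  nlinarith [mul_le_mul_of_nonneg_left hconv hη]

section Iterates

variable {x : ℕ → E} {η : ℕ → ℝ} {xstar : E}

theorem norm_iterate_sub_le (hx : ∀ k, x (k + 1) = x k - η k • f' (x k)) (hη : ∀ k, 0 ≤ η k)
    (hconvex : ∀ y, f y - f xstar ≤ ⟪f' y, y - xstar⟫)
    (hdesc : ∀ k, η k / 2 * ‖f' (x k)‖ ^ 2 ≤ f (x k) - f xstar) (k : ℕ) :
    ‖x k - xstar‖ ≤ ‖x 0 - xstar‖ := by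
  refine antitone_nat_of_succ_le (f := fun k => ‖x k - xstar‖) (fun k => ?_) k.zero_le
  rw [hx k]
  exact norm_sub_smul_sub_le (hconvex (x k)) (hη k) (hdesc k)

theorem sq_mul_iterate_sub_le (hx : ∀ k, x (k + 1) = x k - η k • f' (x k)) (hη : ∀ k, 0 ≤ η k)
    (hconvex : ∀ y, f y - f xstar ≤ ⟪f' y, y - xstar⟫) (hmin : ∀ y, f xstar ≤ f y)
    (hdesc : ∀ k, f (x (k + 1)) ≤ f (x k) - η k / 2 * ‖f' (x k)‖ ^ 2) (k : ℕ) :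
    ‖x 0 - xstar‖ ^ 2 * (f (x (k + 1)) - f xstar) ≤
      ‖x 0 - xstar‖ ^ 2 * (f (x k) - f xstar) - η k / 2 * (f (x k) - f xstar) ^ 2 := by
  have hdrop k : η k / 2 * ‖f' (x k)‖ ^ 2 ≤ f (x k) - f xstar := by
    linarith [hdesc k, hmin (x (k + 1))]
  have hgap : f (x k) - f xstar ≤ ‖f' (x k)‖ * ‖x 0 - xstar‖ :=
    calc f (x k) - f xstar ≤ ⟪f' (x k), x k - xstar⟫ := hconvex (x k)
      _ ≤ ‖f' (x k)‖ * ‖x k - xstar‖ := real_inner_le_norm _ _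
      _ ≤ ‖f' (x k)‖ * ‖x 0 - xstar‖ :=
        mul_le_mul_of_nonneg_left (norm_iterate_sub_le hx hη hconvex hdrop k) (norm_nonneg _)
  have hsq := pow_le_pow_left₀ (sub_nonneg.2 (hmin (x k))) hgap 2
  nlinarith [hdesc k, hη k, mul_le_mul_of_nonneg_left hsq (hη k)]

end Iterates

variable [CompleteSpace E]

theorem HasGradientAt.hasDerivAt_comp_add_smul {g y v : E} {t : ℝ}
    (h : HasGradientAt f g (y + t • v)) :
    HasDerivAt (fun s : ℝ => f (y + s • v)) ⟪g, v⟫ t := by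
  have hline : HasDerivAt (fun s : ℝ => y + s • v) v t := by
    simpa using ((hasDerivAt_id t).smul_const v).const_add y
  have := h.hasFDerivAt.comp_hasDerivAt t hline
  simp only [InnerProductSpace.toDual_apply_apply] at this
  exact this

theorem le_add_inner_add_of_norm_gradient_sub_le (hgrad : ∀ z, HasGradientAt f (f' z) z)
    {y v : E} {L r : ℝ} (hL : ∀ z, ‖z - y‖ ≤ r → ‖f' z - f' y‖ ≤ L * ‖z - y‖) (hv : ‖v‖ ≤ r) :
    f (y + v) ≤ f y + ⟪f' y, v⟫ + L / 2 * ‖v‖ ^ 2 := by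
  set ψ : ℝ → ℝ := fun t => f y + t * ⟪f' y, v⟫ + L / 2 * ‖v‖ ^ 2 * t ^ 2 - f (y + t • v)
  have hψ : ∀ t, HasDerivAt ψ (⟪f' y, v⟫ + L * ‖v‖ ^ 2 * t - ⟪f' (y + t • v), v⟫) t := by
    intro t
    refine ((((hasDerivAt_id t).mul_const ⟪f' y, v⟫).const_add (f y)).add
      ((hasDerivAt_pow 2 t).const_mul (L / 2 * ‖v‖ ^ 2))).sub
      (hgrad (y + t • v)).hasDerivAt_comp_add_smul |>.congr_deriv ?_
    ring
  have hmono : MonotoneOn ψ (Set.Icc 0 1) := by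
    refine monotoneOn_of_hasDerivWithinAt_nonneg (convex_Icc 0 1)
      (fun t _ => (hψ t).continuousAt.continuousWithinAt) (fun t _ => (hψ t).hasDerivWithinAt) ?_
    intro t ht
    rw [interior_Icc] at ht
    have hdist : ‖y + t • v - y‖ = t * ‖v‖ := by
      rw [add_sub_cancel_left, norm_smul, Real.norm_of_nonneg ht.1.le]
    have hlip := hL _ (by rw [hdist]; nlinarith [norm_nonneg v, ht.2])
    have := (real_inner_le_norm _ v).trans (mul_le_mul_of_nonneg_right hlip (norm_nonneg v))
    rw [inner_sub_left, hdist] at this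
    linarith
  have h01 := hmono (Set.left_mem_Icc.2 zero_le_one) (Set.right_mem_Icc.2 zero_le_one) zero_le_one
  simp only [ψ, zero_smul, add_zero, zero_mul, one_smul, one_mul, one_pow, mul_one] at h01
  linarith

theorem mul_norm_gradient_le (hgrad : ∀ z, HasGradientAt f (f' z) z) {y : E} {L r m : ℝ}
    (hL : ∀ z, ‖z - y‖ ≤ r → ‖f' z - f' y‖ ≤ L * ‖z - y‖) (hL0 : 0 ≤ L) (hr : 0 ≤ r)
    (hm : ∀ z, m ≤ f z) :
    r * ‖f' y‖ ≤ f y - m + L / 2 * r ^ 2 := by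
  rcases eq_or_ne (f' y) 0 with hg | hg
  · rw [hg, norm_zero, mul_zero]
    nlinarith [hm y]
  set v := -((r * ‖f' y‖⁻¹) • f' y)
  have hv : ‖v‖ = r := by rw [norm_neg]; exact norm_smul_inv_norm' hr hg
  have hinner : ⟪f' y, v⟫ = -(r * ‖f' y‖) := by
    rw [inner_neg_right, inner_smul_right, real_inner_self_eq_norm_sq]
    field_simp [norm_ne_zero_iff.2 hg]
  have := le_add_inner_add_of_norm_gradient_sub_le hgrad hL hv.le
  rw [hinner, hv] at this
  linarith [hm (y + v)]

theorem apply_sub_smul_gradient_le (hgrad : ∀ z, HasGradientAt f (f' z) z) {y : E} {L r η : ℝ}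
    (hL : ∀ z, ‖z - y‖ ≤ r → ‖f' z - f' y‖ ≤ L * ‖z - y‖) (hη : 0 ≤ η) (hηL : η * L ≤ 1)
    (hηr : η * ‖f' y‖ ≤ r) :
    f (y - η • f' y) ≤ f y - η / 2 * ‖f' y‖ ^ 2 := by
  have hv : ‖-(η • f' y)‖ = η * ‖f' y‖ := by rw [norm_neg, norm_smul, Real.norm_of_nonneg hη]
  have h := le_add_inner_add_of_norm_gradient_sub_le hgrad hL (hv.trans_le hηr)
  rw [← sub_eq_add_neg, inner_neg_right, inner_smul_right, real_inner_self_eq_norm_sq, hv] at h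
  nlinarith [mul_le_mul_of_nonneg_right hηL (by positivity : 0 ≤ η * ‖f' y‖ ^ 2)]

namespace IsH0H1Smooth

variable {H0 H1 m : ℝ}

theorem sqrt_mul_norm_gradient_le (hs : IsH0H1Smooth f f' H0 H1 m)
    (hgrad : ∀ z, HasGradientAt f (f' z) z) (hH0 : 0 ≤ H0) (hH1 : 0 < H1) (hm : ∀ z, m ≤ f z)
    (y : E) : √H1 * ‖f' y‖ ≤ 3 / 2 * (H0 + H1 * (f y - m)) := by
  have hFy := sub_nonneg.2 (hm y)
  have h := mul_norm_gradient_le hgrad (hs.norm_gradient_sub_le hH1 y) (by positivity)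
    (by positivity) hm
  have hsq : √H1 ^ 2 = H1 := Real.sq_sqrt hH1.le
  have hsqrt := Real.sqrt_pos.2 hH1
  calc √H1 * ‖f' y‖ = √H1 ^ 2 * (1 / √H1 * ‖f' y‖) := by field_simp
    _ ≤ H1 * (f y - m + (H0 + H1 * (f y - m)) / 2 * (1 / √H1) ^ 2) := by
      rw [hsq]; exact mul_le_mul_of_nonneg_left h hH1.le
    _ = H1 * (f y - m) + (H0 + H1 * (f y - m)) / 2 := by
      rw [div_pow, hsq]; field_simp
    _ ≤ 3 / 2 * (H0 + H1 * (f y - m)) := by linarith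

theorem apply_sub_warmupStepSize_smul_le (hs : IsH0H1Smooth f f' H0 H1 m)
    (hgrad : ∀ z, HasGradientAt f (f' z) z) (hH0 : 0 < H0) (hH1 : 0 < H1) (hm : ∀ z, m ≤ f z)
    {θ : ℝ} (hθ0 : 0 ≤ θ) (hθ : θ ≤ 1 / 2) (y : E) :
    f (y - warmupStepSize θ H0 H1 (f y - m) • f' y) ≤
      f y - warmupStepSize θ H0 H1 (f y - m) / 2 * ‖f' y‖ ^ 2 := by
  have hη := warmupStepSize_nonneg (H1 := H1) (F := f y - m) hθ0 hH0
  have hηL := warmupStepSize_mul_le (H1 := H1) (F := f y - m) hθ0 hH0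
  have hg := mul_le_mul_of_nonneg_left (hs.sqrt_mul_norm_gradient_le hgrad hH0.le hH1 hm y) hη
  refine apply_sub_smul_gradient_le hgrad (hs.norm_gradient_sub_le hH1 y) hη (by linarith) ?_
  rw [le_div_iff₀' (Real.sqrt_pos.2 hH1)]
  nlinarith

end IsH0H1Smooth


theorem gd_warmup_convex_rate_general
    {d : ℕ}
    (f : EuclideanSpace ℝ (Fin d) → ℝ)
    (f' : EuclideanSpace ℝ (Fin d) → EuclideanSpace ℝ (Fin d))
    (H0 H1 θ : ℝ) (N T : ℕ)
    (xstar : EuclideanSpace ℝ (Fin d))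
    (x : ℕ → EuclideanSpace ℝ (Fin d))
    (hH0 : 0 < H0) (hH1 : 0 < H1)
    (hθ : θ = 1 / (4 * Real.sqrt 2 + 4))
    (hgrad : ∀ y, HasGradientAt f (f' y) y)
    (hsmooth : ∀ y z : EuclideanSpace ℝ (Fin d),
      Real.sqrt H1 * ‖z - y‖ ≤ 1 →
      ‖f' z - f' y‖ ≤ (H0 + H1 * (f y - f xstar)) * ‖z - y‖)
    -- convexity
    (hconvex : ∀ y z : EuclideanSpace ℝ (Fin d), f y - f z ≤ ⟪f' y, y - z⟫)
    -- `f` attains its minimum `f*` at `xstar`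
    (hmin : ∀ y, f xstar ≤ f y)
    -- GD with warm-up step size
    (hupdate : ∀ k, x (k + 1) =
      x k - (θ / max H0 (3 * H1 * (f (x k) - f xstar))) • f' (x k))
    -- `T` is the smallest index `k < N` with `F_k < H0/(3H1)`, else `T = N`
    (hTle : T ≤ N)
    (hTbefore : ∀ k < T, H0 / (3 * H1) ≤ f (x k) - f xstar)
    (hTat : T < N → f (x T) - f xstar < H0 / (3 * H1)) :
    (T < N → f (x N) - f xstar ≤
      min ((1 - θ / (6 * H1 * ‖x 0 - xstar‖ ^ 2)) ^ T * (f (x 0) - f xstar))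
          (2 * H0 * ‖x 0 - xstar‖ ^ 2 / (θ * ((N : ℝ) - T)))) ∧
    (T = N → f (x N) - f xstar ≤
      (1 - θ / (6 * H1 * ‖x 0 - xstar‖ ^ 2)) ^ N * (f (x 0) - f xstar)) := by
  have hθ0 : 0 < θ := by rw [hθ]; positivity
  have hθ2 : θ ≤ 1 / 2 := by
    rw [hθ]; gcongr; linarith [Real.sqrt_nonneg 2]
  set F : ℕ → ℝ := fun k => f (x k) - f xstar
  set η : ℕ → ℝ := fun k => warmupStepSize θ H0 H1 (F k)
  have hF k : 0 ≤ F k := sub_nonneg.2 (hmin _)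
  have hη k : 0 ≤ η k := warmupStepSize_nonneg hθ0.le hH0
  have hdesc k : f (x (k + 1)) ≤ f (x k) - η k / 2 * ‖f' (x k)‖ ^ 2 := by
    rw [hupdate k]
    exact IsH0H1Smooth.apply_sub_warmupStepSize_smul_le hsmooth hgrad hH0 hH1 hmin hθ0.le hθ2 _
  have hanti : Antitone F := antitone_nat_of_succ_le fun k => by
    nlinarith [hdesc k, hη k, sq_nonneg ‖f' (x k)‖]
  have hrec := sq_mul_iterate_sub_le hupdate hη (fun y => hconvex y xstar) hmin hdesc
  rcases (norm_nonneg (x 0 - xstar)).eq_or_lt with hR | hR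
  · have hx0 : x 0 = xstar := sub_eq_zero.1 (norm_eq_zero.1 hR.symm)
    have hFN : f (x N) ≤ f xstar := by simpa [F, hx0] using hanti N.zero_le
    refine ⟨fun _ => ?_, fun _ => ?_⟩ <;> simpa [hx0] using hFN
  have hgeom := le_geom_of_warmup_recursion hH0 hH1 hR hF hrec hTbefore
  refine ⟨fun hTN => le_min ((hanti hTle).trans hgeom) ?_, fun hTN => hTN ▸ hgeom⟩
  have h := natCast_mul_le_of_warmup_recursion hH0 hH1 hθ0 hR hF hanti hrec (hTat hTN) (N - T)
  rw [Nat.add_sub_cancel' hTle, Nat.cast_sub hTle] at h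
  rwa [← div_div, le_div_iff₀' (sub_pos.2 (by exact_mod_cast hTN))]

/-- Convex rate for GD with warm-up step size on a convex
`(H0,H1)`-smooth function (`H0, H1 > 0`) attaining its minimum `f*` at `x*`,
with `θ = 1/(4√2 + 4)` and `η_k = θ / max{H0, 3H1 F_k}` (encoding
`θ·min{1/H0, 1/(3H1 F_k)}` with the convention `η_k = θ/H0` for `F_k = 0`).
`T` is the smallest index `k ∈ {0,…,N-1}` with `F_k < H0/(3H1)`, and `T = N`
if no such index exists; `R = ‖x^0 - x*‖`. -/
theorem gd_warmup_convex_rate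
    {d : ℕ}
    (f : EuclideanSpace ℝ (Fin d) → ℝ)
    (f' : EuclideanSpace ℝ (Fin d) → EuclideanSpace ℝ (Fin d))
    (H0 H1 θ : ℝ) (N T : ℕ)
    (xstar : EuclideanSpace ℝ (Fin d))
    (x : ℕ → EuclideanSpace ℝ (Fin d))
    (hH0 : 0 < H0) (hH1 : 0 < H1)
    (hθ : θ = 1 / (4 * Real.sqrt 2 + 4))
    (hgrad : ∀ y, HasGradientAt f (f' y) y)
    (hsmooth : ∀ y z : EuclideanSpace ℝ (Fin d),
      Real.sqrt H1 * ‖z - y‖ ≤ 1 →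
      ‖f' z - f' y‖ ≤ (H0 + H1 * (f y - f xstar)) * ‖z - y‖)
    -- convexity
    (hconvex : ∀ y z : EuclideanSpace ℝ (Fin d), f y - f z ≤ ⟪f' y, y - z⟫)
    -- `f` attains its minimum `f*` at `xstar`
    (hmin : ∀ y, f xstar ≤ f y)
    -- GD with warm-up step size
    (hupdate : ∀ k, x (k + 1) =
      x k - (θ / max H0 (3 * H1 * (f (x k) - f xstar))) • f' (x k))
    (hN : 0 < N)
    -- `T` is the smallest index `k < N` with `F_k < H0/(3H1)`, else `T = N`
    (hTle : T ≤ N)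
    (hTbefore : ∀ k < T, H0 / (3 * H1) ≤ f (x k) - f xstar)
    (hTat : T < N → f (x T) - f xstar < H0 / (3 * H1)) :
    (T < N → f (x N) - f xstar ≤
      min ((1 - θ / (6 * H1 * ‖x 0 - xstar‖ ^ 2)) ^ T * (f (x 0) - f xstar))
          (2 * H0 * ‖x 0 - xstar‖ ^ 2 / (θ * ((N : ℝ) - T)))) ∧
    (T = N → f (x N) - f xstar ≤
      (1 - θ / (6 * H1 * ‖x 0 - xstar‖ ^ 2)) ^ N * (f (x 0) - f xstar)) :=
  gd_warmup_convex_rate_general f f' H0 H1 θ N T xstar x hH0 hH1 hθ hgrad hsmooth hconvex hmin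
    hupdate hTle hTbefore hTat

end
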